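/- arXiv:2412.06114 — 3 statements merged into one kernel-verified Lean document; each statement's English description precedes it below -/
import Mathlib

section
/- If the intermediate event does not modify the terminal-event hazard, i.e. λ₁(t,s) = λ₀(t) for all 0 ≤ s ≤ t, then the counterfactual cumulative incidence function does not depend on the intermediate-event hazard at all: F(t) = 1 − exp{−Λ₀(t)} for every t ≥ 0. -/
/-!
With `λ₁(t,s) = λ₀(t)` the post-intermediate cumulative hazard is `Λ₁(t,s) = Λ₀(t) − Λ₀(s)`, so
`e^{−Λ₀(s)−Λ⋆(s)} (1 − e^{−Λ₁(t,s)}) = e^{−Λ₀(s)−Λ⋆(s)} − e^{−Λ₀(t)} e^{−Λ⋆(s)}` and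
`F(t) = ∫₀ᵗ e^{−(Λ₀+Λ⋆)} (λ₀+λ⋆) − e^{−Λ₀(t)} ∫₀ᵗ e^{−Λ⋆} λ⋆`.
The substitution `u = Λ(s)` gives `∫₀ᵗ e^{−Λ} λ = 1 − e^{−Λ(t)}` for every continuous hazard, hence
`F(t) = (1 − e^{−Λ₀(t)−Λ⋆(t)}) − e^{−Λ₀(t)} (1 − e^{−Λ⋆(t)}) = 1 − e^{−Λ₀(t)}`.
-/

open MeasureTheory ProbabilityTheory Filter Set

/-- Cumulative hazard `Λ(t) = ∫₀ᵗ λ(u) du`. -/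
noncomputable def cumHaz (lam : ℝ → ℝ) (t : ℝ) : ℝ := ∫ u in (0:ℝ)..t, lam u

/-- Post-intermediate cumulative hazard `Λ₁(t,s) = ∫ₛᵗ λ₁(u,s) du`. -/
noncomputable def cumHaz1 (lam1 : ℝ → ℝ → ℝ) (t s : ℝ) : ℝ := ∫ u in s..t, lam1 u s

/-- The counterfactual cumulative incidence function
`F(t) = ∫₀ᵗ e^{−Λ₀(s)−Λ⋆(s)} λ₀(s) ds + ∫₀ᵗ e^{−Λ₀(s)−Λ⋆(s)} λ⋆(s) (1 − e^{−Λ₁(t,s)}) ds`. -/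
noncomputable def cif (lamS lam0 : ℝ → ℝ) (lam1 : ℝ → ℝ → ℝ) (t : ℝ) : ℝ :=
  (∫ s in (0:ℝ)..t, Real.exp (-cumHaz lam0 s - cumHaz lamS s) * lam0 s) +
  ∫ s in (0:ℝ)..t, Real.exp (-cumHaz lam0 s - cumHaz lamS s) * lamS s *
    (1 - Real.exp (-cumHaz1 lam1 t s))

open Real intervalIntegral

section

variable {lam : ℝ → ℝ} {t : ℝ}

theorem continuousOn_cumHaz (ht : 0 ≤ t) (h : ContinuousOn lam (Icc 0 t)) :
    ContinuousOn (cumHaz lam) (Icc 0 t) := by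
  rw [← uIcc_of_le ht] at h ⊢
  exact continuousOn_primitive_interval (h.integrableOn_compact isCompact_uIcc)

theorem hasDerivAt_cumHaz (h : ContinuousOn lam (Icc 0 t)) {s : ℝ} (hs : s ∈ Ioo 0 t) :
    HasDerivAt (cumHaz lam) (lam s) s :=
  integral_hasDerivAt_right
    ((h.mono (Icc_subset_Icc_right hs.2.le)).intervalIntegrable_of_Icc hs.1.le)
    ((h.mono Ioo_subset_Icc_self).stronglyMeasurableAtFilter isOpen_Ioo s hs)
    (h.continuousAt (Icc_mem_nhds hs.1 hs.2))

theorem cumHaz_add {f g : ℝ → ℝ} (hf : IntervalIntegrable f volume 0 t)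
    (hg : IntervalIntegrable g volume 0 t) :
    cumHaz (f + g) t = cumHaz f t + cumHaz g t :=
  integral_add hf hg

theorem integral_exp_neg_cumHaz_mul (ht : 0 ≤ t) (h : ContinuousOn lam (Icc 0 t)) :
    ∫ s in (0:ℝ)..t, exp (-cumHaz lam s) * lam s = 1 - exp (-cumHaz lam t) := by
  have hsubst := integral_comp_mul_deriv'' (f := cumHaz lam) (g := fun u => exp (-u))
    (by rw [uIcc_of_le ht]; exact continuousOn_cumHaz ht h)
    (fun s hs => by
      rw [min_eq_left ht, max_eq_right ht] at hs
      exact (hasDerivAt_cumHaz h hs).hasDerivWithinAt)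
    (by rwa [uIcc_of_le ht]) (by fun_prop)
  simpa only [cumHaz, Function.comp_apply, integral_same, integral_comp_neg, neg_zero,
    integral_exp, exp_zero] using hsubst

end

theorem cumHaz1_eq_sub_cumHaz {lam1 : ℝ → ℝ → ℝ} {lam0 : ℝ → ℝ} {s t : ℝ}
    (hs : s ∈ Icc 0 t) (h0 : IntervalIntegrable lam0 volume 0 t)
    (hnull : ∀ u ∈ Icc s t, lam1 u s = lam0 u) :
    cumHaz1 lam1 t s = cumHaz lam0 t - cumHaz lam0 s := by
  rw [cumHaz, cumHaz, integral_interval_sub_left h0 (h0.mono_set ?_), cumHaz1]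
  · exact integral_congr fun u hu => hnull u (uIcc_of_le hs.2 ▸ hu)
  · exact uIcc_subset_uIcc_left (by rwa [uIcc_of_le (hs.1.trans hs.2)])

theorem cif_no_modification_general (lamS lam0 : ℝ → ℝ) (lam1 : ℝ → ℝ → ℝ)
    (hScont : ContinuousOn lamS (Set.Ici 0))
    (h0cont : ContinuousOn lam0 (Set.Ici 0))
    (hnull : ∀ s t : ℝ, 0 ≤ s → s ≤ t → lam1 t s = lam0 t) :
    ∀ t : ℝ, 0 ≤ t → cif lamS lam0 lam1 t = 1 - Real.exp (-cumHaz lam0 t) := by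
  intro t ht
  have h0 : ContinuousOn lam0 (Icc 0 t) := h0cont.mono Icc_subset_Ici_self
  have hS : ContinuousOn lamS (Icc 0 t) := hScont.mono Icc_subset_Ici_self
  have hA := continuousOn_cumHaz ht h0
  have hB := continuousOn_cumHaz ht hS
  have hAB := continuousOn_cumHaz ht (h0.add hS)
  have hint : ∀ s ∈ Icc 0 t, ∀ f : ℝ → ℝ, ContinuousOn f (Icc 0 t) →
      IntervalIntegrable f volume 0 s :=
    fun s hs f hf => (hf.mono (Icc_subset_Icc_right hs.2)).intervalIntegrable_of_Icc hs.1
  have hint_t := hint t (right_mem_Icc.2 ht)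
  have hsplit : ∀ s ∈ Icc 0 t,
      exp (-cumHaz lam0 s - cumHaz lamS s) * lamS s * (1 - exp (-cumHaz1 lam1 t s)) =
        exp (-cumHaz (lam0 + lamS) s) * (lam0 + lamS) s
          - exp (-cumHaz lam0 t) * (exp (-cumHaz lamS s) * lamS s)
          - exp (-cumHaz lam0 s - cumHaz lamS s) * lam0 s := by
    intro s hs
    rw [cumHaz1_eq_sub_cumHaz hs (hint_t lam0 h0) (fun u hu => hnull s u hs.1 hu.1),
      cumHaz_add (hint s hs lam0 h0) (hint s hs lamS hS)]
    have hexp : exp (-cumHaz lam0 s - cumHaz lamS s) * exp (-(cumHaz lam0 t - cumHaz lam0 s)) =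
        exp (-cumHaz lam0 t) * exp (-cumHaz lamS s) := by
      rw [← exp_add, ← exp_add]; ring_nf
    simp only [Pi.add_apply, neg_add']
    linear_combination (-lamS s) * hexp
  rw [cif, integral_congr (fun s hs => hsplit s (uIcc_of_le ht ▸ hs)),
    intervalIntegral.integral_sub, intervalIntegral.integral_sub,
    intervalIntegral.integral_const_mul, integral_exp_neg_cumHaz_mul ht (h0.add hS),
    integral_exp_neg_cumHaz_mul ht hS, cumHaz_add (hint_t _ h0) (hint_t _ hS), neg_add, exp_add]
  · ring
  all_goals exact hint_t _ (by fun_prop)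

/-- if `λ₁(t,s) = λ₀(t)` for all `0 ≤ s ≤ t`, then
`F(t) = 1 − exp(−Λ₀(t))` for every `t ≥ 0`. -/
theorem cif_no_modification (lamS lam0 : ℝ → ℝ) (lam1 : ℝ → ℝ → ℝ)
    (hScont : ContinuousOn lamS (Set.Ici 0))
    (h0cont : ContinuousOn lam0 (Set.Ici 0))
    (h1cont : ContinuousOn (fun p : ℝ × ℝ => lam1 p.1 p.2) {p : ℝ × ℝ | 0 ≤ p.2 ∧ p.2 ≤ p.1})
    (hSnn : ∀ t ∈ Set.Ici (0:ℝ), 0 ≤ lamS t)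
    (h0nn : ∀ t ∈ Set.Ici (0:ℝ), 0 ≤ lam0 t)
    (h1nn : ∀ s t : ℝ, 0 ≤ s → s ≤ t → 0 ≤ lam1 t s)
    (hnull : ∀ s t : ℝ, 0 ≤ s → s ≤ t → lam1 t s = lam0 t) :
    ∀ t : ℝ, 0 ≤ t → cif lamS lam0 lam1 t = 1 - Real.exp (-cumHaz lam0 t) :=
  cif_no_modification_general lamS lam0 lam1 hScont h0cont hnull
end

section
/- Sign of the interventional indirect effect in the Markov case: suppose λ₁(t) ≥ λ₀(t) for all t ≥ 0 (the intermediate event increases the terminal hazard). Let λ⋆ᵃ and λ⋆ᵇ be two continuous nonnegative intermediate-event hazards with λ⋆ᵃ(t) ≤ λ⋆ᵇ(t) for all t ≥ 0, and let Fᵃ and Fᵇ be the corresponding counterfactual cumulative incidence functions (with the same λ₀ and λ₁). Then Fᵃ(t) ≤ Fᵇ(t) for all t ≥ 0. -/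
open MeasureTheory ProbabilityTheory Filter Set

/-!
In the Markov case the inner cumulative hazard splits as `Λ₁(t,s) = Λ₁(t) − Λ₁(s)`, and two
applications of the fundamental theorem of calculus to exponentials of cumulative hazards give the
closed form
`F(t) = 1 − e^{−Λ₁(t)} (1 + ∫₀ᵗ (λ₁ − λ₀)(s) e^{Λ₁(s) − Λ₀(s) − Λ⋆(s)} ds)`.
When `λ₁ ≥ λ₀` the integrand is nonnegative and decreasing in `Λ⋆`, so a larger intermediate
hazard yields a larger cumulative incidence.
-/

open Real

lemma integral_exp_mul_of_hasDerivAt {G g : ℝ → ℝ} (hG : ∀ x, HasDerivAt G (g x) x)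
    (hg : Continuous g) (a b : ℝ) :
    ∫ x in a..b, exp (G x) * g x = exp (G b) - exp (G a) := by
  rw [← integral_exp]
  exact intervalIntegral.integral_comp_mul_deriv (fun x _ => hG x) hg.continuousOn continuous_exp

lemma ContinuousOn.exists_continuous_eqOn_Ici {β : Type*} [TopologicalSpace β] {f : ℝ → β}
    {a : ℝ} (h : ContinuousOn f (Ici a)) : ∃ g : ℝ → β, Continuous g ∧ EqOn g f (Ici a) :=
  ⟨fun u => f (max a u), h.comp_continuous (by fun_prop) fun u => le_max_left a u,
    fun _ hu => congrArg f (max_eq_right hu)⟩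

lemma hasDerivAt_cumHaz_s9 {lam : ℝ → ℝ} (h : Continuous lam) (x : ℝ) :
    HasDerivAt (cumHaz lam) (lam x) x :=
  (h.integral_hasStrictDerivAt 0 x).hasDerivAt

lemma continuous_cumHaz {lam : ℝ → ℝ} (h : Continuous lam) : Continuous (cumHaz lam) :=
  continuous_iff_continuousAt.2 fun x => (hasDerivAt_cumHaz_s9 h x).continuousAt

lemma cumHaz_zero (lam : ℝ → ℝ) : cumHaz lam 0 = 0 :=
  intervalIntegral.integral_same

lemma cumHaz_congr {f g : ℝ → ℝ} {t : ℝ} (ht : 0 ≤ t) (h : EqOn f g (Icc 0 t)) :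
    cumHaz f t = cumHaz g t :=
  intervalIntegral.integral_congr (by rwa [uIcc_of_le ht])

lemma cumHaz_mono {f g : ℝ → ℝ} {t : ℝ} (ht : 0 ≤ t) (hf : Continuous f) (hg : Continuous g)
    (h : ∀ u ∈ Icc 0 t, f u ≤ g u) : cumHaz f t ≤ cumHaz g t :=
  intervalIntegral.integral_mono_on ht (hf.intervalIntegrable 0 t) (hg.intervalIntegrable 0 t) h

lemma cumHaz1_markov {lam1 : ℝ → ℝ} (h1 : Continuous lam1) (t s : ℝ) :
    cumHaz1 (fun u _ => lam1 u) t s = cumHaz lam1 t - cumHaz lam1 s :=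
  (intervalIntegral.integral_interval_sub_left (h1.intervalIntegrable 0 t)
    (h1.intervalIntegrable 0 s)).symm

lemma cif_markov_congr {lamS lamS' lam0 lam0' lam1 lam1' : ℝ → ℝ} {t : ℝ} (ht : 0 ≤ t)
    (hS : EqOn lamS lamS' (Ici 0)) (h0 : EqOn lam0 lam0' (Ici 0))
    (h1 : EqOn lam1 lam1' (Ici 0)) :
    cif lamS lam0 (fun u _ => lam1 u) t = cif lamS' lam0' (fun u _ => lam1' u) t := by
  have hΛ {f g : ℝ → ℝ} (h : EqOn f g (Ici 0)) {s : ℝ} (hs : 0 ≤ s) : cumHaz f s = cumHaz g s :=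
    cumHaz_congr hs (h.mono Icc_subset_Ici_self)
  unfold cif
  congr 1 <;> refine intervalIntegral.integral_congr fun s hs => ?_ <;>
    rw [uIcc_of_le ht] at hs
  · simp only [hΛ h0 hs.1, hΛ hS hs.1, h0 hs.1]
  · have hΛ1 : cumHaz1 (fun u _ => lam1 u) t s = cumHaz1 (fun u _ => lam1' u) t s :=
      intervalIntegral.integral_congr fun u hu =>
        h1 (hs.1.trans (by rw [uIcc_of_le hs.2] at hu; exact hu.1))
    simp only [hΛ h0 hs.1, hΛ hS hs.1, hS hs.1, hΛ1]

lemma cif_markov_eq {lamS lam0 lam1 : ℝ → ℝ} (hS : Continuous lamS) (h0 : Continuous lam0)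
    (h1 : Continuous lam1) (t : ℝ) :
    cif lamS lam0 (fun u _ => lam1 u) t
      = 1 - exp (-cumHaz lam1 t) *
          (1 + ∫ s in (0:ℝ)..t, (lam1 s - lam0 s) *
            exp (cumHaz lam1 s - cumHaz lam0 s - cumHaz lamS s)) := by
  have hΛ0 := hasDerivAt_cumHaz_s9 h0
  have hΛS := hasDerivAt_cumHaz_s9 hS
  have hΛ1 := hasDerivAt_cumHaz_s9 h1
  have hsurv := integral_exp_mul_of_hasDerivAt (fun x => ((hΛ0 x).neg).sub (hΛS x))
    (h0.neg.sub hS) 0 t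
  have htilt := integral_exp_mul_of_hasDerivAt (fun x => ((hΛ1 x).sub (hΛ0 x)).sub (hΛS x))
    ((h1.sub h0).sub hS) 0 t
  simp only [Pi.sub_apply, Pi.neg_apply, cumHaz_zero, neg_zero, sub_zero, exp_zero]
    at hsurv htilt
  set Λ0 := cumHaz lam0
  set ΛS := cumHaz lamS
  set Λ1 := cumHaz lam1
  -- `e^{−Λ₀(s)−Λ⋆(s)} e^{−(Λ₁(t)−Λ₁(s))} = e^{−Λ₁(t)} e^{Λ₁(s)−Λ₀(s)−Λ⋆(s)}` splits the integrand
  -- into the two exact derivatives above and the integrand of the closed form.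
  have hsplit : ∀ s, exp (-Λ0 s - ΛS s) * lam0 s
      + exp (-Λ0 s - ΛS s) * lamS s * (1 - exp (-(Λ1 t - Λ1 s)))
      = -(exp (-Λ0 s - ΛS s) * (-lam0 s - lamS s))
        + exp (-Λ1 t) * (exp (Λ1 s - Λ0 s - ΛS s) * (lam1 s - lam0 s - lamS s))
        - exp (-Λ1 t) * ((lam1 s - lam0 s) * exp (Λ1 s - Λ0 s - ΛS s)) := by
    intro s
    have hexp : exp (-Λ0 s - ΛS s) * exp (-(Λ1 t - Λ1 s))
        = exp (-Λ1 t) * exp (Λ1 s - Λ0 s - ΛS s) := by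
      rw [← exp_add, ← exp_add]
      ring_nf
    linear_combination -lamS s * hexp
  have hcΛ0 := continuous_cumHaz h0
  have hcΛS := continuous_cumHaz hS
  have hcΛ1 := continuous_cumHaz h1
  unfold cif
  simp only [cumHaz1_markov h1]
  rw [← intervalIntegral.integral_add, intervalIntegral.integral_congr fun s _ => hsplit s,
    intervalIntegral.integral_sub, intervalIntegral.integral_add, intervalIntegral.integral_neg,
    intervalIntegral.integral_const_mul, intervalIntegral.integral_const_mul, hsurv, htilt]
  · have : exp (-Λ1 t) * exp (Λ1 t - Λ0 t - ΛS t) = exp (-Λ0 t - ΛS t) := by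
      rw [← exp_add]; ring_nf
    linear_combination this
  all_goals apply Continuous.intervalIntegrable; fun_prop

lemma cif_markov_le_of_cumHaz_le {lamSa lamSb lam0 lam1 : ℝ → ℝ} (hSa : Continuous lamSa)
    (hSb : Continuous lamSb) (h0 : Continuous lam0) (h1 : Continuous lam1) {t : ℝ} (ht : 0 ≤ t)
    (hmod : ∀ s ∈ Icc 0 t, lam0 s ≤ lam1 s)
    (hΛS : ∀ s ∈ Icc 0 t, cumHaz lamSa s ≤ cumHaz lamSb s) :
    cif lamSa lam0 (fun u _ => lam1 u) t ≤ cif lamSb lam0 (fun u _ => lam1 u) t := by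
  have hcΛSa := continuous_cumHaz hSa
  have hcΛSb := continuous_cumHaz hSb
  have hcΛ0 := continuous_cumHaz h0
  have hcΛ1 := continuous_cumHaz h1
  rw [cif_markov_eq hSa h0 h1, cif_markov_eq hSb h0 h1]
  gcongr 1 - _ * (1 + ?_)
  refine intervalIntegral.integral_mono_on ht ?_ ?_ fun s hs => ?_
  · exact Continuous.intervalIntegrable (by fun_prop) 0 t
  · exact Continuous.intervalIntegrable (by fun_prop) 0 t
  · have := hΛS s hs
    gcongr
    exact sub_nonneg.2 (hmod s hs)

theorem cif_indirect_sign_markov_general (lamSa lamSb lam0 lam1 : ℝ → ℝ)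
    (hSacont : ContinuousOn lamSa (Set.Ici 0))
    (hSbcont : ContinuousOn lamSb (Set.Ici 0))
    (h0cont : ContinuousOn lam0 (Set.Ici 0))
    (h1cont : ContinuousOn lam1 (Set.Ici 0))
    (hmod : ∀ t ∈ Set.Ici (0:ℝ), lam0 t ≤ lam1 t)
    (hSle : ∀ t ∈ Set.Ici (0:ℝ), lamSa t ≤ lamSb t) :
    ∀ t : ℝ, 0 ≤ t →
      cif lamSa lam0 (fun u _ => lam1 u) t ≤ cif lamSb lam0 (fun u _ => lam1 u) t := by
  intro t ht
  obtain ⟨Sa, hSa, eSa⟩ := hSacont.exists_continuous_eqOn_Ici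
  obtain ⟨Sb, hSb, eSb⟩ := hSbcont.exists_continuous_eqOn_Ici
  obtain ⟨L0, h0, e0⟩ := h0cont.exists_continuous_eqOn_Ici
  obtain ⟨L1, h1, e1⟩ := h1cont.exists_continuous_eqOn_Ici
  rw [cif_markov_congr ht eSa.symm e0.symm e1.symm, cif_markov_congr ht eSb.symm e0.symm e1.symm]
  refine cif_markov_le_of_cumHaz_le hSa hSb h0 h1 ht (fun s hs => ?_)
    fun s hs => cumHaz_mono hs.1 hSa hSb fun u hu => ?_
  · rw [e0 hs.1, e1 hs.1]
    exact hmod s hs.1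
  · rw [eSa hu.1, eSb hu.1]
    exact hSle u hu.1

/-- sign of the interventional indirect effect in the Markov case.
If `λ₁ ≥ λ₀` and `λ⋆ᵃ ≤ λ⋆ᵇ`, then `Fᵃ(t) ≤ Fᵇ(t)` for all `t ≥ 0`. -/
theorem cif_indirect_sign_markov (lamSa lamSb lam0 lam1 : ℝ → ℝ)
    (hSacont : ContinuousOn lamSa (Set.Ici 0))
    (hSbcont : ContinuousOn lamSb (Set.Ici 0))
    (h0cont : ContinuousOn lam0 (Set.Ici 0))
    (h1cont : ContinuousOn lam1 (Set.Ici 0))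
    (hSann : ∀ t ∈ Set.Ici (0:ℝ), 0 ≤ lamSa t)
    (hSbnn : ∀ t ∈ Set.Ici (0:ℝ), 0 ≤ lamSb t)
    (h0nn : ∀ t ∈ Set.Ici (0:ℝ), 0 ≤ lam0 t)
    (h1nn : ∀ t ∈ Set.Ici (0:ℝ), 0 ≤ lam1 t)
    (hmod : ∀ t ∈ Set.Ici (0:ℝ), lam0 t ≤ lam1 t)
    (hSle : ∀ t ∈ Set.Ici (0:ℝ), lamSa t ≤ lamSb t) :
    ∀ t : ℝ, 0 ≤ t →
      cif lamSa lam0 (fun u _ => lam1 u) t ≤ cif lamSb lam0 (fun u _ => lam1 u) t :=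
  cif_indirect_sign_markov_general lamSa lamSb lam0 lam1 hSacont hSbcont h0cont h1cont hmod hSle
end

section
/- Identification of the counterfactual cumulative incidence function in the absence of time-varying confounders (Theorem 1, no-confounder case): in the latent-time construction, for every t ≥ 0 the distribution function of the terminal event time equals the identification formula, P(T₂ ≤ t) = F(t) = ∫₀ᵗ exp{−Λ₀(s)−Λ⋆(s)} λ₀(s) ds + ∫₀ᵗ exp{−Λ₀(s)−Λ⋆(s)} λ⋆(s) (1 − exp{−Λ₁(t,s)}) ds. In particular, when the three hazards are taken from treatment-indexed triples, the counterfactual cumulative incidence F(t;z,z) built with hazards all under treatment z coincides with the natural cumulative incidence F(t;z) of the terminal event under treatment z. -/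
open MeasureTheory ProbabilityTheory Filter Set

/-! Writing `T₁ = Λ⋆⁻¹(E₁)` and `D₀ = Λ₀⁻¹(E₂)` shows that `T₁`, `D₀`, `E₃` are independent
and that `T₁`, `D₀` have densities `λ⋆ e^{-Λ⋆}`, `λ₀ e^{-Λ₀}`. The event `{T₂ ≤ t}` is the
disjoint union of `{D₀ ≤ T₁, D₀ ≤ t}` and `{T₁ < D₀, T₁ ≤ t, E₃ ≤ Λ₁(t, T₁)}`. Conditioning the
first on `D₀ = s` leaves the survival `e^{-Λ⋆(s)}` of `T₁`, conditioning the second on `T₁ = s`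
leaves `e^{-Λ₀(s)} (1 - e^{-Λ₁(t,s)})`; integrating against the densities gives the two terms
of `F(t)`. -/

open Real

lemma lintegral_Icc_ofReal_eq_ofReal_integral {f : ℝ → ℝ} {a b : ℝ} (hab : a ≤ b)
    (hf : ContinuousOn f (Icc a b)) (hnn : ∀ x ∈ Icc a b, 0 ≤ f x) :
    ∫⁻ x in Icc a b, ENNReal.ofReal (f x) = ENNReal.ofReal (∫ x in a..b, f x) := by
  rw [← ofReal_integral_eq_lintegral_ofReal hf.integrableOn_Icc
    ((ae_restrict_iff' measurableSet_Icc).2 (ae_of_all _ hnn)), integral_Icc_eq_integral_Ioc,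
    intervalIntegral.integral_of_le hab]

section Exponential

variable {r x : ℝ}

lemma expMeasure_Iic (hr : 0 < r) (hx : 0 ≤ x) :
    expMeasure r (Iic x) = ENNReal.ofReal (1 - exp (-(r * x))) := by
  have := isProbabilityMeasure_expMeasure hr
  rw [← ofReal_cdf, cdf_expMeasure_eq hr, if_pos hx]

lemma expMeasure_Ioi (hr : 0 < r) (hx : 0 ≤ x) :
    expMeasure r (Ioi x) = ENNReal.ofReal (exp (-(r * x))) := by
  have := isProbabilityMeasure_expMeasure hr
  have hexp : exp (-(r * x)) ≤ 1 := exp_le_one_iff.2 (by nlinarith)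
  rw [← compl_Iic, prob_compl_eq_one_sub measurableSet_Iic, expMeasure_Iic hr hx,
    ← ENNReal.ofReal_one, ← ENNReal.ofReal_sub _ (sub_nonneg.2 hexp), sub_sub_cancel]

lemma expMeasure_Ici (hr : 0 < r) (hx : 0 ≤ x) :
    expMeasure r (Ici x) = ENNReal.ofReal (exp (-(r * x))) := by
  have hx0 : expMeasure r {x} = 0 :=
    withDensity_absolutelyContinuous _ _ (measure_singleton x)
  rw [← measure_congr (Ioi_ae_eq_Ici' hx0), expMeasure_Ioi hr hx]

end Exponential

section CumulativeHazard

variable {lam : ℝ → ℝ}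

lemma strictMonoOn_cumHaz (hc : ContinuousOn lam (Ici 0)) (hpos : ∀ u ∈ Ici (0:ℝ), 0 < lam u) :
    StrictMonoOn (cumHaz lam) (Ici 0) := by
  intro a ha b hb hab
  have hint : IntervalIntegrable lam volume a b :=
    (hc.mono fun u hu => ha.trans hu.1).intervalIntegrable_of_Icc hab.le
  have hpos_ab : 0 < ∫ u in a..b, lam u :=
    intervalIntegral.intervalIntegral_pos_of_pos_on hint (fun u hu => hpos u (ha.trans hu.1.le)) hab
  have hint0 : IntervalIntegrable lam volume 0 a :=
    (hc.mono fun u hu => hu.1).intervalIntegrable_of_Icc ha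
  rw [cumHaz, cumHaz, ← intervalIntegral.integral_add_adjacent_intervals hint0 hint]
  linarith

lemma cumHaz_nonneg (hnn : ∀ u ∈ Ici (0:ℝ), 0 ≤ lam u) {x : ℝ} (hx : 0 ≤ x) :
    0 ≤ cumHaz lam x :=
  intervalIntegral.integral_nonneg hx fun u hu => hnn u hu.1

lemma continuousOn_cumHaz_s15 (hc : ContinuousOn lam (Ici 0)) (b : ℝ) :
    ContinuousOn (cumHaz lam) (Icc 0 b) :=
  (intervalIntegral.continuousOn_primitive (hc.mono Icc_subset_Ici_self).integrableOn_Icc).congr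
    fun _ hx => intervalIntegral.integral_of_le hx.1

lemma hasDerivAt_cumHaz_s15 (hc : ContinuousOn lam (Ici 0)) {x : ℝ} (hx : 0 < x) :
    HasDerivAt (cumHaz lam) (lam x) x :=
  intervalIntegral.integral_hasDerivAt_right
    ((hc.mono fun _ hu => hu.1).intervalIntegrable_of_Icc hx.le)
    ((hc.mono (Ioi_subset_Ici le_rfl)).stronglyMeasurableAtFilter isOpen_Ioi _ hx)
    (hc.continuousAt (Ici_mem_nhds hx))

lemma continuousOn_hazardDensity (hc : ContinuousOn lam (Ici 0)) (b : ℝ) :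
    ContinuousOn (fun s => lam s * exp (-cumHaz lam s)) (Icc 0 b) :=
  (hc.mono Icc_subset_Ici_self).mul (continuousOn_cumHaz_s15 hc b).neg.rexp

lemma integral_hazardDensity (hc : ContinuousOn lam (Ici 0)) {x : ℝ} (hx : 0 ≤ x) :
    ∫ s in (0:ℝ)..x, lam s * exp (-cumHaz lam s) = 1 - exp (-cumHaz lam x) := by
  have hderiv : ∀ y ∈ Ioo 0 x, HasDerivWithinAt (fun s => -exp (-cumHaz lam s))
      (lam y * exp (-cumHaz lam y)) (Ioi y) y := fun y hy =>
    ((hasDerivAt_cumHaz_s15 hc hy.1).neg.exp.neg).hasDerivWithinAt.congr_deriv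
      (by rw [Pi.neg_apply]; ring)
  rw [intervalIntegral.integral_eq_sub_of_hasDeriv_right_of_le (f := fun s => -exp (-cumHaz lam s))
    hx (continuousOn_cumHaz_s15 hc x).neg.rexp.neg hderiv
    ((continuousOn_hazardDensity hc x).intervalIntegrable_of_Icc hx)]
  simp only [cumHaz, intervalIntegral.integral_same, neg_zero, exp_zero]
  ring

end CumulativeHazard

section PostIntermediateHazard

variable {lam1 : ℝ → ℝ → ℝ}

lemma continuousOn_cumHaz1
    (h1c : ContinuousOn (fun p : ℝ × ℝ => lam1 p.1 p.2) {p : ℝ × ℝ | 0 ≤ p.2 ∧ p.2 ≤ p.1})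
    (t : ℝ) : ContinuousOn (fun s => cumHaz1 lam1 t s) (Icc 0 t) := by
  -- clamp `(s, u)` into the domain `0 ≤ s ≤ u` so that the integrand becomes jointly continuous
  have hclamp : Continuous fun p : ℝ × ℝ => lam1 (max p.2 (max p.1 0)) (max p.1 0) :=
    h1c.comp_continuous ((continuous_snd.max (continuous_fst.max continuous_const)).prodMk
      (continuous_fst.max continuous_const)) fun p => ⟨le_max_right _ _, le_max_right _ _⟩
  refine (intervalIntegral.continuous_parametric_intervalIntegral_of_continuous (μ := volume)
    (f := fun s u => lam1 (max u (max s 0)) (max s 0)) (a₀ := t) hclamp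
    continuous_id).neg.continuousOn.congr fun s hs => ?_
  rw [cumHaz1, intervalIntegral.integral_symm t s]
  refine congrArg Neg.neg (intervalIntegral.integral_congr fun u hu => ?_)
  rw [uIcc_comm, uIcc_of_le hs.2] at hu
  simp only [max_eq_left hs.1, max_eq_left hu.1]

lemma cumHaz1_nonneg {s t : ℝ} (hmono : StrictMonoOn (fun u => cumHaz1 lam1 u s) (Ici s))
    (hst : s ≤ t) : 0 ≤ cumHaz1 lam1 t s := by
  simpa [cumHaz1] using hmono.monotoneOn (le_refl s) hst hst

end PostIntermediateHazard

noncomputable def hazardLaw (lam : ℝ → ℝ) : Measure ℝ :=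
  (volume.restrict (Ici 0)).withDensity fun s => ENNReal.ofReal (lam s * exp (-cumHaz lam s))

section HazardLaw

variable {lam : ℝ → ℝ}

lemma setLIntegral_hazardLaw (hc : ContinuousOn lam (Ici 0)) (hnn : ∀ u ∈ Ici (0:ℝ), 0 ≤ lam u)
    {t : ℝ} (ht : 0 ≤ t) {g : ℝ → ℝ} (hg : ContinuousOn g (Icc 0 t))
    (hgnn : ∀ s ∈ Icc 0 t, 0 ≤ g s) :
    ∫⁻ s in Icc 0 t, ENNReal.ofReal (g s) ∂hazardLaw lam
      = ENNReal.ofReal (∫ s in (0:ℝ)..t, lam s * exp (-cumHaz lam s) * g s) := by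
  have hrestrict :
      (volume.restrict (Ici (0:ℝ))).restrict (Icc 0 t) = volume.restrict (Icc 0 t) := by
    rw [Measure.restrict_restrict measurableSet_Icc, inter_eq_left.2 Icc_subset_Ici_self]
  have hdens : ∀ s ∈ Icc 0 t, 0 ≤ lam s * exp (-cumHaz lam s) :=
    fun s hs => mul_nonneg (hnn s hs.1) (exp_nonneg _)
  rw [hazardLaw, setLIntegral_withDensity_eq_setLIntegral_mul_non_measurable₀ _ ?_ _
    measurableSet_Icc (ae_of_all _ fun _ => ENNReal.ofReal_lt_top), hrestrict,
    ← lintegral_Icc_ofReal_eq_ofReal_integral (f := fun s => lam s * exp (-cumHaz lam s) * g s) ht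
      ((continuousOn_hazardDensity hc t).mul hg)
      fun s hs => mul_nonneg (hdens s hs) (hgnn s hs)]
  · exact setLIntegral_congr_fun measurableSet_Icc fun s hs => by
      rw [Pi.mul_apply, ENNReal.ofReal_mul (hdens s hs)]
  · rw [hrestrict]
    exact ((continuousOn_hazardDensity hc t).aemeasurable measurableSet_Icc).ennreal_ofReal

lemma hazardLaw_Iic (lam : ℝ → ℝ) (x : ℝ) : hazardLaw lam (Iic x) = hazardLaw lam (Icc 0 x) := by
  simp only [hazardLaw, withDensity_apply _ measurableSet_Iic,
    withDensity_apply _ measurableSet_Icc,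
    Measure.restrict_restrict measurableSet_Iic, Measure.restrict_restrict measurableSet_Icc,
    Iic_inter_Ici, inter_eq_left.2 Icc_subset_Ici_self]

lemma hazardLaw_Icc (hc : ContinuousOn lam (Ici 0)) (hnn : ∀ u ∈ Ici (0:ℝ), 0 ≤ lam u)
    {x : ℝ} (hx : 0 ≤ x) : hazardLaw lam (Icc 0 x) = ENNReal.ofReal (1 - exp (-cumHaz lam x)) := by
  have h := setLIntegral_hazardLaw hc hnn hx continuousOn_const fun _ _ => zero_le_one
  simp only [ENNReal.ofReal_one, setLIntegral_one, mul_one] at h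
  rw [h, integral_hazardDensity hc hx]

end HazardLaw

noncomputable def hazardInverse (Λ : ℝ → ℝ) (x : ℝ) : ℝ := sInf {u | 0 ≤ u ∧ x ≤ Λ u}

section LatentTime

variable {Λ : ℝ → ℝ}

lemma hazardInverse_apply (hm : StrictMonoOn Λ (Ici 0)) {a : ℝ} (ha : 0 ≤ a) :
    hazardInverse Λ (Λ a) = a := by
  have hset : {u | 0 ≤ u ∧ Λ a ≤ Λ u} = Ici a := by
    ext u
    exact ⟨fun hu => (hm.le_iff_le ha hu.1).1 hu.2,
      fun hu => ⟨ha.trans hu, (hm.le_iff_le ha (ha.trans hu)).2 hu⟩⟩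
  rw [hazardInverse, hset, csInf_Ici]

lemma monotone_hazardInverse (htop : Tendsto Λ atTop atTop) : Monotone (hazardInverse Λ) := by
  intro x y hxy
  obtain ⟨u, hyu, hu⟩ := ((htop.eventually_ge_atTop y).and (eventually_ge_atTop 0)).exists
  exact csInf_le_csInf ⟨0, fun _ hv => hv.1⟩ ⟨u, hu, hyu⟩ fun v hv => ⟨hv.1, hxy.trans hv.2⟩

variable {Ω : Type*} {E T : Ω → ℝ}

lemma latent_eq_hazardInverse_comp (hm : StrictMonoOn Λ (Ici 0))
    (hTE : ∀ ω, 0 ≤ T ω ∧ Λ (T ω) = E ω) : T = hazardInverse Λ ∘ E :=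
  funext fun ω => by rw [Function.comp_apply, ← (hTE ω).2, hazardInverse_apply hm (hTE ω).1]

variable [MeasurableSpace Ω] {P : Measure Ω}

lemma map_latent_apply (hE : Measurable E) (hT : Measurable T)
    (hTE : ∀ ω, 0 ≤ T ω ∧ Λ (T ω) = E ω) {S S' : Set ℝ} (hS : MeasurableSet S)
    (hS' : MeasurableSet S') (hSS' : ∀ u, 0 ≤ u → (u ∈ S ↔ Λ u ∈ S')) :
    P.map T S = P.map E S' := by
  rw [Measure.map_apply hT hS, Measure.map_apply hE hS']
  congr 1
  ext ω
  rw [mem_preimage, mem_preimage, ← (hTE ω).2]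
  exact hSS' _ (hTE ω).1

variable {lam : ℝ → ℝ}

lemma map_latent_Ici (hc : ContinuousOn lam (Ici 0)) (hpos : ∀ u ∈ Ici (0:ℝ), 0 < lam u)
    (hE : Measurable E) (hEd : P.map E = expMeasure 1) (hT : Measurable T)
    (hTE : ∀ ω, 0 ≤ T ω ∧ cumHaz lam (T ω) = E ω) {s : ℝ} (hs : 0 ≤ s) :
    P.map T (Ici s) = ENNReal.ofReal (exp (-cumHaz lam s)) := by
  rw [map_latent_apply hE hT hTE measurableSet_Ici measurableSet_Ici
      fun u hu => ((strictMonoOn_cumHaz hc hpos).le_iff_le hs hu).symm,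
    hEd, expMeasure_Ici one_pos (cumHaz_nonneg (fun u hu => (hpos u hu).le) hs), one_mul]

lemma map_latent_Ioi (hc : ContinuousOn lam (Ici 0)) (hpos : ∀ u ∈ Ici (0:ℝ), 0 < lam u)
    (hE : Measurable E) (hEd : P.map E = expMeasure 1) (hT : Measurable T)
    (hTE : ∀ ω, 0 ≤ T ω ∧ cumHaz lam (T ω) = E ω) {s : ℝ} (hs : 0 ≤ s) :
    P.map T (Ioi s) = ENNReal.ofReal (exp (-cumHaz lam s)) := by
  rw [map_latent_apply hE hT hTE measurableSet_Ioi measurableSet_Ioi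
      fun u hu => ((strictMonoOn_cumHaz hc hpos).lt_iff_lt hs hu).symm,
    hEd, expMeasure_Ioi one_pos (cumHaz_nonneg (fun u hu => (hpos u hu).le) hs), one_mul]

lemma map_latent_eq_hazardLaw [IsProbabilityMeasure P] (hc : ContinuousOn lam (Ici 0))
    (hpos : ∀ u ∈ Ici (0:ℝ), 0 < lam u) (hE : Measurable E) (hEd : P.map E = expMeasure 1)
    (hT : Measurable T) (hTE : ∀ ω, 0 ≤ T ω ∧ cumHaz lam (T ω) = E ω) :
    P.map T = hazardLaw lam := by
  have := Measure.isProbabilityMeasure_map (μ := P) hT.aemeasurable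
  have hnn : ∀ u ∈ Ici (0:ℝ), 0 ≤ lam u := fun u hu => (hpos u hu).le
  refine Measure.ext_of_Iic _ _ fun x => ?_
  rw [hazardLaw_Iic]
  rcases lt_or_ge x 0 with hx | hx
  · rw [Icc_eq_empty (not_le.2 hx), measure_empty, map_latent_apply hE hT hTE measurableSet_Iic
      MeasurableSet.empty fun u hu => iff_of_false (not_le.2 (hx.trans_le hu)) (notMem_empty _),
      measure_empty]
  · rw [hazardLaw_Icc hc hnn hx, map_latent_apply hE hT hTE measurableSet_Iic measurableSet_Iic
      fun u hu => ((strictMonoOn_cumHaz hc hpos).le_iff_le hu hx).symm,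
      hEd, expMeasure_Iic one_pos (cumHaz_nonneg hnn hx), one_mul]

end LatentTime

section Independence

variable {Ω α β : Type*} [MeasurableSpace Ω] [MeasurableSpace α] [MeasurableSpace β]
  {P : Measure Ω}

lemma ProbabilityTheory.iIndepFun.comp_vecCons_three {X₁ X₂ X₃ : Ω → α}
    (h : iIndepFun ![X₁, X₂, X₃] P) {f g : α → α} (hf : Measurable f) (hg : Measurable g) :
    iIndepFun ![f ∘ X₁, g ∘ X₂, X₃] P := by
  convert h.comp ![f, g, id] fun i => by fin_cases i; exacts [hf, hg, measurable_id] using 1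
  funext i
  fin_cases i <;> rfl

lemma ProbabilityTheory.IndepFun.measure_preimage_eq_lintegral [IsFiniteMeasure P]
    {X : Ω → α} {Y : Ω → β} (hX : Measurable X) (hY : Measurable Y) (hXY : IndepFun X Y P)
    {C : Set (α × β)} (hC : MeasurableSet C) :
    P ((fun ω => (X ω, Y ω)) ⁻¹' C) = ∫⁻ x, P.map Y (Prod.mk x ⁻¹' C) ∂P.map X := by
  rw [← Measure.map_apply (hX.prodMk hY) hC,
    hXY.map_prod_eq_prod_map_map hX.aemeasurable hY.aemeasurable, Measure.prod_apply hC]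

lemma measure_preimage_eq_integral_hazardDensity [IsFiniteMeasure P] {lam : ℝ → ℝ}
    (hc : ContinuousOn lam (Ici 0)) (hnn : ∀ u ∈ Ici (0:ℝ), 0 ≤ lam u) {X : Ω → ℝ} {Y : Ω → β}
    (hX : Measurable X) (hY : Measurable Y) (hXY : IndepFun X Y P)
    (hlaw : P.map X = hazardLaw lam) {t : ℝ} (ht : 0 ≤ t) {C : Set (ℝ × β)}
    (hC : MeasurableSet C) (hCt : ∀ p ∈ C, p.1 ∈ Icc 0 t) {g : ℝ → ℝ}
    (hg : ContinuousOn g (Icc 0 t)) (hgnn : ∀ s ∈ Icc 0 t, 0 ≤ g s)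
    (hfib : ∀ s ∈ Icc 0 t, P.map Y (Prod.mk s ⁻¹' C) = ENNReal.ofReal (g s)) :
    P ((fun ω => (X ω, Y ω)) ⁻¹' C)
      = ENNReal.ofReal (∫ s in (0:ℝ)..t, lam s * exp (-cumHaz lam s) * g s) := by
  have hsupp : (fun s => P.map Y (Prod.mk s ⁻¹' C)).support ⊆ Icc 0 t :=
    Function.support_subset_iff'.2 fun s hs => by
      rw [show Prod.mk s ⁻¹' C = ∅ from eq_empty_of_forall_notMem fun y hy => hs (hCt (s, y) hy),
        measure_empty]
  rw [hXY.measure_preimage_eq_lintegral hX hY hC, hlaw, ← setLIntegral_eq_of_support_subset hsupp,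
    setLIntegral_congr_fun measurableSet_Icc hfib, setLIntegral_hazardLaw hc hnn ht hg hgnn]

end Independence

lemma integral_hazardDensity_mul_nonneg {lam g : ℝ → ℝ} (hnn : ∀ u ∈ Ici (0:ℝ), 0 ≤ lam u)
    {t : ℝ} (ht : 0 ≤ t) (hgnn : ∀ s ∈ Icc 0 t, 0 ≤ g s) :
    0 ≤ ∫ s in (0:ℝ)..t, lam s * exp (-cumHaz lam s) * g s :=
  intervalIntegral.integral_nonneg ht fun s hs =>
    mul_nonneg (mul_nonneg (hnn s hs.1) (exp_nonneg _)) (hgnn s hs)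

lemma terminal_le_iff {L : ℝ → ℝ} {a d e x t : ℝ} (hL : StrictMonoOn L (Ici a))
    (hx₁ : d ≤ a → x = d) (hx₂ : a < d → a ≤ x ∧ L x = e) :
    x ≤ t ↔ (d ≤ a ∧ d ≤ t) ∨ (a < d ∧ a ≤ t ∧ e ≤ L t) := by
  rcases le_or_gt d a with hda | had
  · simp [hx₁ hda, hda, not_lt.2 hda]
  · obtain ⟨hax, rfl⟩ := hx₂ had
    simp only [had, not_le.2 had, true_and, false_and, false_or]
    exact ⟨fun hxt => ⟨hax.trans hxt, hL.monotoneOn hax (hax.trans hxt) hxt⟩,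
      fun ⟨hat, hle⟩ => (hL.le_iff_le hax hat).1 hle⟩

lemma setOf_terminal_le_eq_union {Ω : Type*} {T1 D0 T2 E3 : Ω → ℝ} {lam1 : ℝ → ℝ → ℝ}
    (h1mono : ∀ s : ℝ, 0 ≤ s → StrictMonoOn (fun u => cumHaz1 lam1 u s) (Ici s))
    (hT1 : ∀ ω, 0 ≤ T1 ω) (hD0 : ∀ ω, 0 ≤ D0 ω) (hT2a : ∀ ω, D0 ω ≤ T1 ω → T2 ω = D0 ω)
    (hT2b : ∀ ω, T1 ω < D0 ω → T1 ω ≤ T2 ω ∧ cumHaz1 lam1 (T2 ω) (T1 ω) = E3 ω) (t : ℝ) :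
    {ω | T2 ω ≤ t} = {ω | D0 ω ∈ Icc 0 t ∧ D0 ω ≤ T1 ω} ∪
      {ω | T1 ω ∈ Icc 0 t ∧ T1 ω < D0 ω ∧ E3 ω ≤ cumHaz1 lam1 t (T1 ω)} := by
  ext ω
  have := hT1 ω
  have := hD0 ω
  simp only [mem_ofPred_eq, mem_union, mem_Icc,
    terminal_le_iff (h1mono _ (hT1 ω)) (hT2a ω) (hT2b ω)]
  tauto

section Terminal

variable {Ω : Type*} [MeasurableSpace Ω] {P : Measure Ω} {lamS lam0 : ℝ → ℝ} {t : ℝ}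

lemma measure_terminal_before_intermediate [IsFiniteMeasure P] (hSc : ContinuousOn lamS (Ici 0))
    (h0c : ContinuousOn lam0 (Ici 0)) (h0nn : ∀ u ∈ Ici (0:ℝ), 0 ≤ lam0 u) {D T : Ω → ℝ}
    (hD : Measurable D) (hT : Measurable T) (hDT : IndepFun D T P)
    (hlawD : P.map D = hazardLaw lam0)
    (hsurvT : ∀ s, 0 ≤ s → P.map T (Ici s) = ENNReal.ofReal (exp (-cumHaz lamS s))) (ht : 0 ≤ t) :
    P {ω | D ω ∈ Icc 0 t ∧ D ω ≤ T ω}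
      = ENNReal.ofReal (∫ s in (0:ℝ)..t, lam0 s * exp (-cumHaz lam0 s) * exp (-cumHaz lamS s)) :=
  measure_preimage_eq_integral_hazardDensity h0c h0nn hD hT hDT hlawD ht
    (C := {p : ℝ × ℝ | p.1 ∈ Icc 0 t ∧ p.1 ≤ p.2})
    ((measurable_fst measurableSet_Icc).inter (measurableSet_le measurable_fst measurable_snd))
    (fun _ hp => hp.1) (continuousOn_cumHaz_s15 hSc t).neg.rexp (fun _ _ => (exp_pos _).le)
    fun s hs => by
      rw [show Prod.mk s ⁻¹' {p : ℝ × ℝ | p.1 ∈ Icc 0 t ∧ p.1 ≤ p.2} = Ici s by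
        ext u; simp [hs.1, hs.2], hsurvT s hs.1]

lemma measure_terminal_after_intermediate [IsFiniteMeasure P] {lam1 : ℝ → ℝ → ℝ}
    (hSc : ContinuousOn lamS (Ici 0)) (hSnn : ∀ u ∈ Ici (0:ℝ), 0 ≤ lamS u)
    (h0c : ContinuousOn lam0 (Ici 0))
    (h1c : ContinuousOn (fun p : ℝ × ℝ => lam1 p.1 p.2) {p : ℝ × ℝ | 0 ≤ p.2 ∧ p.2 ≤ p.1})
    (h1mono : ∀ s : ℝ, 0 ≤ s → StrictMonoOn (fun u => cumHaz1 lam1 u s) (Ici s))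
    {T D E : Ω → ℝ} (hT : Measurable T) (hD : Measurable D) (hE : Measurable E)
    (hTDE : IndepFun T (fun ω => (D ω, E ω)) P) (hDE : IndepFun D E P)
    (hlawT : P.map T = hazardLaw lamS)
    (hsurvD : ∀ s, 0 ≤ s → P.map D (Ioi s) = ENNReal.ofReal (exp (-cumHaz lam0 s)))
    (hEd : P.map E = expMeasure 1) (ht : 0 ≤ t) :
    P {ω | T ω ∈ Icc 0 t ∧ T ω < D ω ∧ E ω ≤ cumHaz1 lam1 t (T ω)}
      = ENNReal.ofReal (∫ s in (0:ℝ)..t, lamS s * exp (-cumHaz lamS s) *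
          (exp (-cumHaz lam0 s) * (1 - exp (-cumHaz1 lam1 t s)))) := by
  set C := {p : ℝ × ℝ × ℝ | p.1 ∈ Icc 0 t ∧ p.1 < p.2.1 ∧ p.2.2 ≤ cumHaz1 lam1 t p.1}
  have hclosed : IsClosed (Prod.fst ⁻¹' Icc 0 t ∩
      (fun p : ℝ × ℝ × ℝ => (p.2.2, cumHaz1 lam1 t p.1)) ⁻¹' {q | q.1 ≤ q.2}) :=
    (continuous_snd.snd.continuousOn.prodMk ((continuousOn_cumHaz1 h1c t).comp
      continuous_fst.continuousOn fun _ hp => hp)).preimage_isClosed_of_isClosed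
      (isClosed_Icc.preimage continuous_fst) (isClosed_le continuous_fst continuous_snd)
  have hC : MeasurableSet C := by
    convert hclosed.measurableSet.inter (measurableSet_lt measurable_fst measurable_snd.fst) using 1
    ext p
    simp only [C, mem_ofPred_eq, mem_inter_iff, mem_preimage]
    tauto
  have hΛ₁ : ∀ s ∈ Icc 0 t, 0 ≤ cumHaz1 lam1 t s := fun s hs => cumHaz1_nonneg (h1mono s hs.1) hs.2
  refine measure_preimage_eq_integral_hazardDensity hSc hSnn hT (hD.prodMk hE) hTDE hlawT ht hC
    (fun _ hp => hp.1) ((continuousOn_cumHaz_s15 h0c t).neg.rexp.mul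
      (continuousOn_const.sub (continuousOn_cumHaz1 h1c t).neg.rexp))
    (fun s hs => mul_nonneg (exp_pos _).le
      (sub_nonneg.2 (exp_le_one_iff.2 (neg_nonpos.2 (hΛ₁ s hs))))) fun s hs => ?_
  rw [show Prod.mk s ⁻¹' C = Ioi s ×ˢ Iic (cumHaz1 lam1 t s) by ext; simp [C, hs.1, hs.2],
    hDE.map_prod_eq_prod_map_map hD.aemeasurable hE.aemeasurable, Measure.prod_prod,
    hsurvD s hs.1, hEd, expMeasure_Iic one_pos (hΛ₁ s hs), one_mul,
    ← ENNReal.ofReal_mul (exp_pos _).le]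

end Terminal

lemma ofReal_cif_eq_add {lamS lam0 : ℝ → ℝ} {lam1 : ℝ → ℝ → ℝ}
    (hSnn : ∀ u ∈ Ici (0:ℝ), 0 ≤ lamS u) (h0nn : ∀ u ∈ Ici (0:ℝ), 0 ≤ lam0 u)
    (h1mono : ∀ s : ℝ, 0 ≤ s → StrictMonoOn (fun u => cumHaz1 lam1 u s) (Ici s)) {t : ℝ}
    (ht : 0 ≤ t) :
    ENNReal.ofReal (cif lamS lam0 lam1 t)
      = ENNReal.ofReal (∫ s in (0:ℝ)..t, lam0 s * exp (-cumHaz lam0 s) * exp (-cumHaz lamS s)) +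
        ENNReal.ofReal (∫ s in (0:ℝ)..t, lamS s * exp (-cumHaz lamS s) *
          (exp (-cumHaz lam0 s) * (1 - exp (-cumHaz1 lam1 t s)))) := by
  rw [← ENNReal.ofReal_add (integral_hazardDensity_mul_nonneg h0nn ht fun _ _ => (exp_pos _).le)
    (integral_hazardDensity_mul_nonneg hSnn ht fun s hs => mul_nonneg (exp_pos _).le
      (sub_nonneg.2 (exp_le_one_iff.2 (neg_nonpos.2 (cumHaz1_nonneg (h1mono s hs.1) hs.2))))),
    cif]
  congr 2 <;> refine intervalIntegral.integral_congr fun s _ => ?_ <;>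
    simp only [sub_eq_add_neg, exp_add] <;> ring

theorem latent_identification_general
    {Ω : Type*} [MeasurableSpace Ω] (P : Measure Ω) [IsProbabilityMeasure P]
    (lamS lam0 : ℝ → ℝ) (lam1 : ℝ → ℝ → ℝ)
    (hScont : ContinuousOn lamS (Set.Ici 0))
    (h0cont : ContinuousOn lam0 (Set.Ici 0))
    (h1cont : ContinuousOn (fun p : ℝ × ℝ => lam1 p.1 p.2) {p : ℝ × ℝ | 0 ≤ p.2 ∧ p.2 ≤ p.1})
    (hSpos : ∀ t ∈ Set.Ici (0:ℝ), 0 < lamS t)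
    (h0pos : ∀ t ∈ Set.Ici (0:ℝ), 0 < lam0 t)
    (hStop : Tendsto (cumHaz lamS) atTop atTop)
    (h0top : Tendsto (cumHaz lam0) atTop atTop)
    (h1mono : ∀ s : ℝ, 0 ≤ s → StrictMonoOn (fun t => cumHaz1 lam1 t s) (Set.Ici s))
    (E1 E2 E3 : Ω → ℝ)
    (hE1m : Measurable E1) (hE2m : Measurable E2) (hE3m : Measurable E3)
    (hindep : iIndepFun ![E1, E2, E3] P)
    (hE1d : P.map E1 = expMeasure 1)
    (hE2d : P.map E2 = expMeasure 1)
    (hE3d : P.map E3 = expMeasure 1)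
    (T1 D0 T2 : Ω → ℝ)
    (hT1 : ∀ ω, 0 ≤ T1 ω ∧ cumHaz lamS (T1 ω) = E1 ω)
    (hD0 : ∀ ω, 0 ≤ D0 ω ∧ cumHaz lam0 (D0 ω) = E2 ω)
    (hT2a : ∀ ω, D0 ω ≤ T1 ω → T2 ω = D0 ω)
    (hT2b : ∀ ω, T1 ω < D0 ω → T1 ω ≤ T2 ω ∧ cumHaz1 lam1 (T2 ω) (T1 ω) = E3 ω)
    :
    ∀ t : ℝ, 0 ≤ t →
      P {ω | T2 ω ≤ t} = ENNReal.ofReal (cif lamS lam0 lam1 t) := by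
  intro t ht
  have hSnn : ∀ u ∈ Ici (0:ℝ), 0 ≤ lamS u := fun u hu => (hSpos u hu).le
  have h0nn : ∀ u ∈ Ici (0:ℝ), 0 ≤ lam0 u := fun u hu => (h0pos u hu).le
  have hT1eq := latent_eq_hazardInverse_comp (strictMonoOn_cumHaz hScont hSpos) hT1
  have hD0eq := latent_eq_hazardInverse_comp (strictMonoOn_cumHaz h0cont h0pos) hD0
  have hgS := (monotone_hazardInverse hStop).measurable
  have hg0 := (monotone_hazardInverse h0top).measurable
  have hT1m : Measurable T1 := hT1eq ▸ hgS.comp hE1m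
  have hD0m : Measurable D0 := hD0eq ▸ hg0.comp hE2m
  have hind : iIndepFun ![T1, D0, E3] P := by
    rw [hT1eq, hD0eq]
    exact hindep.comp_vecCons_three hgS hg0
  have hvec : ∀ i, Measurable (![T1, D0, E3] i) := fun i => by
    fin_cases i; exacts [hT1m, hD0m, hE3m]
  have hmeas : MeasurableSet {ω | D0 ω ∈ Icc 0 t ∧ D0 ω ≤ T1 ω} :=
    (hD0m measurableSet_Icc).inter (measurableSet_le hD0m hT1m)
  rw [setOf_terminal_le_eq_union h1mono (fun ω => (hT1 ω).1) (fun ω => (hD0 ω).1) hT2a hT2b,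
    measure_union' (disjoint_left.2 fun ω h₁ h₂ => not_lt.2 h₁.2 h₂.2.1) hmeas,
    measure_terminal_before_intermediate hScont h0cont h0nn hD0m hT1m
      (by simpa using hind.indepFun (show (1 : Fin 3) ≠ 0 by decide))
      (map_latent_eq_hazardLaw h0cont h0pos hE2m hE2d hD0m hD0)
      (fun s hs => map_latent_Ici hScont hSpos hE1m hE1d hT1m hT1 hs) ht,
    measure_terminal_after_intermediate hScont hSnn h0cont h1cont h1mono hT1m hD0m hE3m
      (by simpa using (hind.indepFun_prodMk hvec 1 2 0 (by decide) (by decide)).symm)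
      (by simpa using hind.indepFun (show (1 : Fin 3) ≠ 2 by decide))
      (map_latent_eq_hazardLaw hScont hSpos hE1m hE1d hT1m hT1)
      (fun s hs => map_latent_Ioi h0cont h0pos hE2m hE2d hD0m hD0 hs) hE3d ht,
    ofReal_cif_eq_add hSnn h0nn h1mono ht]

/-- identification of the counterfactual cumulative incidence function
in the absence of time-varying confounders: in the latent-time construction,
`P(T₂ ≤ t) = F(t)` for every `t ≥ 0`. -/
theorem latent_identification
    {Ω : Type*} [MeasurableSpace Ω] (P : Measure Ω) [IsProbabilityMeasure P]
    (lamS lam0 : ℝ → ℝ) (lam1 : ℝ → ℝ → ℝ)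
    (hScont : ContinuousOn lamS (Set.Ici 0))
    (h0cont : ContinuousOn lam0 (Set.Ici 0))
    (h1cont : ContinuousOn (fun p : ℝ × ℝ => lam1 p.1 p.2) {p : ℝ × ℝ | 0 ≤ p.2 ∧ p.2 ≤ p.1})
    (hSpos : ∀ t ∈ Set.Ici (0:ℝ), 0 < lamS t)
    (h0pos : ∀ t ∈ Set.Ici (0:ℝ), 0 < lam0 t)
    (h1nn : ∀ s t : ℝ, 0 ≤ s → s ≤ t → 0 ≤ lam1 t s)
    (hStop : Tendsto (cumHaz lamS) atTop atTop)
    (h0top : Tendsto (cumHaz lam0) atTop atTop)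
    (h1mono : ∀ s : ℝ, 0 ≤ s → StrictMonoOn (fun t => cumHaz1 lam1 t s) (Set.Ici s))
    (h1top : ∀ s : ℝ, 0 ≤ s → Tendsto (fun t => cumHaz1 lam1 t s) atTop atTop)
    (E1 E2 E3 : Ω → ℝ)
    (hE1m : Measurable E1) (hE2m : Measurable E2) (hE3m : Measurable E3)
    (hindep : iIndepFun ![E1, E2, E3] P)
    (hE1d : P.map E1 = expMeasure 1)
    (hE2d : P.map E2 = expMeasure 1)
    (hE3d : P.map E3 = expMeasure 1)
    (T1 D0 T2 : Ω → ℝ)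
    (hT1 : ∀ ω, 0 ≤ T1 ω ∧ cumHaz lamS (T1 ω) = E1 ω)
    (hD0 : ∀ ω, 0 ≤ D0 ω ∧ cumHaz lam0 (D0 ω) = E2 ω)
    (hT2a : ∀ ω, D0 ω ≤ T1 ω → T2 ω = D0 ω)
    (hT2b : ∀ ω, T1 ω < D0 ω → T1 ω ≤ T2 ω ∧ cumHaz1 lam1 (T2 ω) (T1 ω) = E3 ω)
    :
    ∀ t : ℝ, 0 ≤ t →
      P {ω | T2 ω ≤ t} = ENNReal.ofReal (cif lamS lam0 lam1 t) :=
  latent_identification_general P lamS lam0 lam1 hScont h0cont h1cont hSpos h0pos hStop h0top h1mono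
    E1 E2 E3 hE1m hE2m hE3m hindep hE1d hE2d hE3d T1 D0 T2 hT1 hD0 hT2a hT2b
end
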